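/- (Theorem 4.1(1)) Let d be an even integer with d ≥ max(2, deg f), let N₁,…,Nₙ > 0, and let g := (1−(x₁/N₁)^d, …, 1−(xₙ/Nₙ)^d). Then s(f,g) ≥ f_{tr,N}. -/

import Mathlib

open MvPolynomial Finset

noncomputable section

/-- The weight `|α| = Σᵢ αᵢ` of a multi-exponent. -/
def wt {n : ℕ} (α : Fin n →₀ ℕ) : ℕ := α.sum fun _ e => e

/-- `Δ(f)`: exponents `α` with `|α| ≤ d`, `f_α ≠ 0`, `α ∉ {0, d·e₁, …, d·eₙ}`, and
`f_α x^α` not a square in `ℝ[x]` (equivalently `f_α < 0` or some `αᵢ` odd). -/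
def Delta {n : ℕ} (d : ℕ) (f : MvPolynomial (Fin n) ℝ) : Finset (Fin n →₀ ℕ) :=
  f.support.filter fun α =>
    wt α ≤ d ∧ α ≠ 0 ∧ (∀ i, α ≠ Finsupp.single i d) ∧
      (f.coeff α < 0 ∨ ∃ i, Odd (α i))

/-- `z` is an `h`-feasible family. -/
def Feasible {n : ℕ} (d : ℕ) (h : MvPolynomial (Fin n) ℝ)
    (z : (Fin n →₀ ℕ) → Fin n → ℝ) : Prop :=
  (∀ α ∈ Delta d h, ∀ i, 0 ≤ z α i ∧ (z α i = 0 ↔ α i = 0)) ∧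
  (∀ i, ∑ α ∈ Delta d h, z α i ≤ h.coeff (Finsupp.single i d)) ∧
  (∀ α ∈ Delta d h, wt α = d →
    ∏ i ∈ univ.filter (fun i => 0 < α i), (z α i / (α i : ℝ)) ^ (α i) =
      (h.coeff α / (d : ℝ)) ^ d)

/-- The objective value `obj_h(z)`. -/
def obj {n : ℕ} (d : ℕ) (h : MvPolynomial (Fin n) ℝ)
    (z : (Fin n →₀ ℕ) → Fin n → ℝ) : ℝ :=
  ∑ α ∈ (Delta d h).filter (fun α => wt α < d),
    ((d : ℝ) - (wt α : ℝ)) *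
      ((h.coeff α / (d : ℝ)) ^ d *
        ∏ i ∈ univ.filter (fun i => 0 < α i), ((α i : ℝ) / z α i) ^ (α i)) ^
        ((1 : ℝ) / ((d : ℝ) - (wt α : ℝ)))

/-- `ρ(h) = inf { obj_h(z) : z h-feasible }`, `+∞` if infeasible. -/
def rho {n : ℕ} (d : ℕ) (h : MvPolynomial (Fin n) ℝ) : EReal :=
  sInf {r : EReal | ∃ z, Feasible d h z ∧ r = ((obj d h z : ℝ) : EReal)}

/-- `h_gp = h(0) - ρ(h)`. -/
def gp {n : ℕ} (d : ℕ) (h : MvPolynomial (Fin n) ℝ) : EReal :=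
  ((h.coeff 0 : ℝ) : EReal) - rho d h

/-- `s(f,g) = sup { G(λ)_gp : λ ∈ [0,∞)^m }` where `G(λ) = f - Σ λⱼ gⱼ`. -/
def sBound {n m : ℕ} (d : ℕ) (f : MvPolynomial (Fin n) ℝ)
    (g : Fin m → MvPolynomial (Fin n) ℝ) : EReal :=
  sSup {r : EReal | ∃ lam : Fin m → ℝ, (∀ j, 0 ≤ lam j) ∧
    r = gp d (f - ∑ j, C (lam j) * g j)}

/-- `Δ'(f)`: nonzero exponents `α` with `f_α ≠ 0` and `f_α x^α` not a square. -/
def Delta' {n : ℕ} (f : MvPolynomial (Fin n) ℝ) : Finset (Fin n →₀ ℕ) :=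
  f.support.filter fun α => α ≠ 0 ∧ (f.coeff α < 0 ∨ ∃ i, Odd (α i))

/-- The trivial bound `f_{tr,N} = f(0) - Σ_{α ∈ Δ'(f)} |f_α| N^α`. -/
def trivialBound {n : ℕ} (f : MvPolynomial (Fin n) ℝ) (N : Fin n → ℝ) : ℝ :=
  f.coeff 0 - ∑ α ∈ Delta' f, |f.coeff α| * ∏ i, N i ^ (α i)

lemma wt_eq_sum {n : ℕ} (α : Fin n →₀ ℕ) : wt α = ∑ i, α i :=
  Finsupp.sum_fintype _ _ (fun _ => rfl)

/-- Theorem 4.1(1): `s(f,g) ≥ f_{tr,N}` for the hypercube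
constraints `gᵢ = 1 - (xᵢ/Nᵢ)^d`. -/
theorem stmt_10 (n d : ℕ) (hd2 : 2 ≤ d) (hdeven : Even d)
    (f : MvPolynomial (Fin n) ℝ) (hf : f.totalDegree ≤ d)
    (N : Fin n → ℝ) (hN : ∀ i, 0 < N i)
    (g : Fin n → MvPolynomial (Fin n) ℝ)
    (hg : ∀ i, g i = 1 - (C (N i)⁻¹ * X i) ^ d) :
    ((trivialBound f N : ℝ) : EReal) ≤ sBound d f g := by
  classical
  have hd0 : d ≠ 0 := by omega
  have hdR : (0:ℝ) < (d:ℝ) := by exact_mod_cast Nat.pos_of_ne_zero hd0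
  set Nprod : (Fin n →₀ ℕ) → ℝ := fun α => ∏ i, N i ^ (α i) with hNprod
  have hNp : ∀ α, 0 < Nprod α := fun α => Finset.prod_pos fun i _ => pow_pos (hN i) _
  set z : (Fin n →₀ ℕ) → Fin n → ℝ :=
    fun α i => (α i : ℝ) * (|f.coeff α| * Nprod α / ((d:ℝ) * N i ^ d)) with hzdef
  set lam : Fin n → ℝ := fun i =>
    N i ^ d * (max 0 (-(f.coeff (Finsupp.single i d))) + ∑ α ∈ Delta d f, z α i)
    with hlamdef
  have hznn : ∀ α i, 0 ≤ z α i := by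
    intro α i
    apply mul_nonneg (Nat.cast_nonneg _)
    exact div_nonneg (mul_nonneg (abs_nonneg _) (hNp α).le)
      (mul_pos hdR (pow_pos (hN i) d)).le
  have hlamnn : ∀ j, 0 ≤ lam j := by
    intro j
    apply mul_nonneg (pow_pos (hN j) d).le
    exact add_nonneg (le_max_left _ _) (Finset.sum_nonneg fun α _ => hznn α j)
  set G : MvPolynomial (Fin n) ℝ := f - ∑ j, C (lam j) * g j with hGdef
  -- membership facts
  have hmem : ∀ α ∈ Delta d f, f.coeff α ≠ 0 ∧ wt α ≤ d ∧ α ≠ 0 ∧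
      (∀ i, α ≠ Finsupp.single i d) := by
    intro α hα
    simp only [Delta, Finset.mem_filter, mem_support_iff] at hα
    exact ⟨hα.1, hα.2.1, hα.2.2.1, hα.2.2.2.1⟩
  -- coefficients of G
  have hgcoeff : ∀ (j : Fin n) (α : Fin n →₀ ℕ), (g j).coeff α =
      (if α = 0 then 1 else 0) - (N j)⁻¹ ^ d * (if Finsupp.single j d = α then 1 else 0) := by
    intro j α
    rw [hg j, mul_pow, ← C_pow]
    simp only [coeff_sub, coeff_C_mul, coeff_X_pow, coeff_one]
    congr 1
    simp [eq_comm]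
  have hGc : ∀ α, α ≠ 0 → (∀ i, α ≠ Finsupp.single i d) → G.coeff α = f.coeff α := by
    intro α h0 hs
    have h1 : ∀ j, coeff α (C (lam j) * g j) = 0 := by
      intro j
      rw [coeff_C_mul, hgcoeff, if_neg h0, if_neg (fun h => (hs j) h.symm)]
      ring
    rw [hGdef, coeff_sub, coeff_sum]
    simp [h1]
  have hGc0 : G.coeff 0 = f.coeff 0 - ∑ j, lam j := by
    rw [hGdef, coeff_sub, coeff_sum]
    congr 1
    apply Finset.sum_congr rfl
    intro j _
    rw [coeff_C_mul, hgcoeff, if_pos rfl,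
        if_neg (by simp [Finsupp.single_eq_zero, hd0])]
    ring
  have hGcd : ∀ i, G.coeff (Finsupp.single i d) =
      f.coeff (Finsupp.single i d) + lam i * (N i)⁻¹ ^ d := by
    intro i
    have h1 : ∀ j, coeff (Finsupp.single i d) (C (lam j) * g j) =
        if j = i then -(lam i * (N i)⁻¹ ^ d) else 0 := by
      intro j
      rw [coeff_C_mul, hgcoeff,
          if_neg (by simp [Finsupp.single_eq_zero, hd0])]
      by_cases h : j = i
      · subst h
        rw [if_pos rfl, if_pos rfl]
        ring
      · rw [if_neg (by rw [Finsupp.single_left_inj hd0]; exact h), if_neg h]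
        ring
    rw [hGdef, coeff_sub, coeff_sum, Finset.sum_congr rfl (fun j _ => h1 j),
        Finset.sum_ite_eq' univ i, if_pos (mem_univ i)]
    ring
  have hDelta : Delta d G = Delta d f := by
    ext α
    simp only [Delta, Finset.mem_filter, mem_support_iff]
    constructor
    · rintro ⟨hne, hw, h0, hs, hneg⟩
      rw [hGc α h0 hs] at hne hneg
      exact ⟨hne, hw, h0, hs, hneg⟩
    · rintro ⟨hne, hw, h0, hs, hneg⟩
      rw [← hGc α h0 hs] at hne hneg
      exact ⟨hne, hw, h0, hs, hneg⟩
  -- value of z / α i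
  have hzval : ∀ (α : Fin n →₀ ℕ), ∀ i, 0 < α i → z α i / (α i : ℝ) =
      |f.coeff α| * Nprod α / ((d:ℝ) * N i ^ d) := by
    intro α i hi
    rw [hzdef]
    exact mul_div_cancel_left₀ _ (by exact_mod_cast hi.ne')
  -- the product formula
  have hprod : ∀ (α : Fin n →₀ ℕ),
      ∏ i ∈ univ.filter (fun i => 0 < α i), (z α i / (α i:ℝ))^(α i) =
      (|f.coeff α| * Nprod α / (d:ℝ)) ^ (wt α) / (Nprod α) ^ d := by
    intro α
    have step1 : ∏ i ∈ univ.filter (fun i => 0 < α i), (z α i / (α i:ℝ))^(α i)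
        = ∏ i ∈ univ.filter (fun i => 0 < α i),
            ((|f.coeff α| * Nprod α / (d:ℝ)) / N i ^ d)^(α i) := by
      apply prod_congr rfl
      intro i hi
      rw [hzval α i (mem_filter.mp hi).2]
      congr 1
      ring
    rw [step1]
    rw [prod_filter_of_ne (by
      intro i _ h
      rcases Nat.eq_zero_or_pos (α i) with h'|h'
      · exact absurd (by rw [h', pow_zero]) h
      · exact h')]
    have step2 : ∀ i : Fin n, ((|f.coeff α| * Nprod α / (d:ℝ)) / N i ^ d)^(α i)
        = (|f.coeff α| * Nprod α / (d:ℝ))^(α i) / ((N i)^(α i))^d := by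
      intro i
      rw [div_pow]
      congr 1
      rw [← pow_mul, ← pow_mul, mul_comm]
    rw [Finset.prod_congr rfl (fun i _ => step2 i), prod_div_distrib,
        prod_pow_eq_pow_sum, ← wt_eq_sum, ← prod_pow]
  -- feasibility
  have hfeas : Feasible d G z := by
    refine ⟨?_, ?_, ?_⟩
    · intro α hα i
      rw [hDelta] at hα
      obtain ⟨hne, -, -, -⟩ := hmem α hα
      have hcpos : 0 < |f.coeff α| := abs_pos.mpr hne
      refine ⟨hznn α i, ?_, ?_⟩
      · intro h
        by_contra hai
        have hai' : 0 < α i := Nat.pos_of_ne_zero hai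
        have hpos : (0:ℝ) < z α i := by
          rw [hzdef]
          apply mul_pos (by exact_mod_cast hai')
          exact div_pos (mul_pos hcpos (hNp α)) (mul_pos hdR (pow_pos (hN i) d))
        exact hpos.ne' h
      · intro h
        simp [hzdef, h]
    · intro i
      rw [hDelta, hGcd i]
      have h1 : lam i * (N i)⁻¹ ^ d =
          max 0 (-(f.coeff (Finsupp.single i d))) + ∑ α ∈ Delta d f, z α i := by
        simp only [hlamdef]
        rw [inv_pow, mul_comm (N i ^ d), mul_assoc,
            mul_inv_cancel₀ (pow_pos (hN i) d).ne', mul_one]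
      rw [h1]
      have h2 := le_max_right (0:ℝ) (-(f.coeff (Finsupp.single i d)))
      linarith
    · intro α hα hw
      rw [hDelta] at hα
      obtain ⟨hne, -, h0, hs⟩ := hmem α hα
      rw [hGc α h0 hs, hprod α, hw]
      have h1 : |f.coeff α| * Nprod α / (d:ℝ) / Nprod α = |f.coeff α| / (d:ℝ) := by
        rw [div_right_comm, mul_div_cancel_right₀ _ (hNp α).ne']
      rw [← div_pow, h1, div_pow, div_pow, Even.pow_abs hdeven]
  -- the objective value
  have hobj : obj d G z = ∑ α ∈ (Delta d f).filter (fun α => wt α < d),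
      ((d:ℝ) - (wt α:ℝ)) * (|f.coeff α| * Nprod α / (d:ℝ)) := by
    rw [obj, hDelta]
    apply Finset.sum_congr rfl
    intro α hα'
    obtain ⟨hα, hwlt⟩ := mem_filter.mp hα'
    obtain ⟨hne, hwle, h0, hs⟩ := hmem α hα
    have hcpos : 0 < |f.coeff α| := abs_pos.mpr hne
    set x := |f.coeff α| * Nprod α / (d:ℝ) with hx
    have hxpos : 0 < x := div_pos (mul_pos hcpos (hNp α)) hdR
    congr 1
    have hinv : ∏ i ∈ univ.filter (fun i => 0 < α i), ((α i:ℝ)/ z α i)^(α i)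
        = (x ^ wt α / (Nprod α)^d)⁻¹ := by
      rw [← hprod α, ← prod_inv_distrib]
      apply prod_congr rfl
      intro i _
      rw [← inv_pow, inv_div]
    rw [hGc α h0 hs, hinv]
    have hB : (f.coeff α / (d:ℝ))^d * (x ^ wt α / (Nprod α)^d)⁻¹
        = x ^ (d - wt α) := by
      have h1 : (f.coeff α / (d:ℝ))^d = (|f.coeff α| / (d:ℝ))^d := by
        rw [div_pow, div_pow, Even.pow_abs hdeven]
      rw [h1, pow_sub₀ _ hxpos.ne' hwle, inv_div]
      have h2 : x ^ d = (|f.coeff α| / (d:ℝ))^d * (Nprod α)^d := by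
        rw [← mul_pow, hx]
        congr 1
        ring
      rw [h2, mul_assoc, ← div_eq_mul_inv]
    rw [hB]
    have hcast : ((d - wt α : ℕ):ℝ) = (d:ℝ) - (wt α:ℝ) := by
      push_cast [Nat.cast_sub hwle]
      ring
    have hmne : ((d:ℝ) - (wt α:ℝ)) ≠ 0 := by
      have : (wt α : ℝ) < (d:ℝ) := by exact_mod_cast hwlt
      linarith
    rw [← Real.rpow_natCast x (d - wt α), ← Real.rpow_mul hxpos.le, hcast,
        mul_one_div, div_self hmne, Real.rpow_one]
  -- sum of lambdas
  have hNzd : ∀ (α : Fin n →₀ ℕ) (j : Fin n), N j ^ d * z α j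
      = (α j : ℝ) * (|f.coeff α| * Nprod α / (d:ℝ)) := by
    intro α j
    have hNjne : N j ^ d ≠ 0 := (pow_pos (hN j) d).ne'
    have hdne : (d:ℝ) ≠ 0 := hdR.ne'
    simp only [hzdef]
    field_simp
  have hsumlam : ∑ j, lam j
      = (∑ j, N j ^ d * max 0 (-(f.coeff (Finsupp.single j d))))
        + ∑ α ∈ Delta d f, (wt α : ℝ) * (|f.coeff α| * Nprod α / (d:ℝ)) := by
    simp only [hlamdef]
    have h1 : ∀ j : Fin n, N j ^ d *
        (max 0 (-(f.coeff (Finsupp.single j d))) + ∑ α ∈ Delta d f, z α j)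
        = N j ^ d * max 0 (-(f.coeff (Finsupp.single j d)))
          + ∑ α ∈ Delta d f, N j ^ d * z α j := by
      intro j
      rw [mul_add, Finset.mul_sum]
    rw [Finset.sum_congr rfl (fun j _ => h1 j), Finset.sum_add_distrib]
    congr 1
    rw [Finset.sum_comm]
    apply Finset.sum_congr rfl
    intro α _
    rw [Finset.sum_congr rfl (fun j _ => hNzd α j), ← Finset.sum_mul]
    congr 1
    rw [wt_eq_sum]
    push_cast
    ring
  -- combine the Delta-sums
  have hsplit : (∑ α ∈ Delta d f, (wt α:ℝ) * (|f.coeff α| * Nprod α / (d:ℝ)))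
      + obj d G z = ∑ α ∈ Delta d f, |f.coeff α| * Nprod α := by
    rw [hobj]
    rw [← Finset.sum_filter_add_sum_filter_not (Delta d f) (fun α => wt α < d)
        (fun α => (wt α:ℝ) * (|f.coeff α| * Nprod α / (d:ℝ)))]
    rw [← Finset.sum_filter_add_sum_filter_not (Delta d f) (fun α => wt α < d)
        (fun α => |f.coeff α| * Nprod α)]
    have hA : ∑ α ∈ (Delta d f).filter (fun α => ¬ wt α < d),
        (wt α:ℝ) * (|f.coeff α| * Nprod α / (d:ℝ))
        = ∑ α ∈ (Delta d f).filter (fun α => ¬ wt α < d), |f.coeff α| * Nprod α := by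
      apply Finset.sum_congr rfl
      intro α hα'
      obtain ⟨hα, hwnlt⟩ := mem_filter.mp hα'
      obtain ⟨-, hwle, -, -⟩ := hmem α hα
      have hweq : wt α = d := le_antisymm hwle (not_lt.mp hwnlt)
      rw [hweq]
      field_simp
    have hB : ∑ α ∈ (Delta d f).filter (fun α => wt α < d),
          (wt α:ℝ) * (|f.coeff α| * Nprod α / (d:ℝ))
        + ∑ α ∈ (Delta d f).filter (fun α => wt α < d),
          ((d:ℝ) - (wt α:ℝ)) * (|f.coeff α| * Nprod α / (d:ℝ))
        = ∑ α ∈ (Delta d f).filter (fun α => wt α < d), |f.coeff α| * Nprod α := by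
      rw [← Finset.sum_add_distrib]
      apply Finset.sum_congr rfl
      intro α _
      field_simp
      ring
    linarith
  -- decomposition of Delta'
  have hE : Delta' f = Delta d f ∪
      (univ.filter (fun i => f.coeff (Finsupp.single i d) < 0)).image
        (fun i => Finsupp.single i d) := by
    ext α
    simp only [Delta', Delta, mem_union, mem_filter, mem_image, mem_support_iff,
      mem_univ, true_and]
    constructor
    · rintro ⟨hne, h0, hneg⟩
      by_cases hs : ∀ i, α ≠ Finsupp.single i d
      · exact Or.inl ⟨hne, ⟨le_trans (le_totalDegree (mem_support_iff.mpr hne)) hf,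
          h0, hs, hneg⟩⟩
      · push_neg at hs
        obtain ⟨i, hi⟩ := hs
        refine Or.inr ⟨i, ?_, hi.symm⟩
        rcases hneg with h|⟨j, hj⟩
        · rwa [← hi]
        · exfalso
          rw [hi, Finsupp.single_apply] at hj
          by_cases hij : i = j
          · rw [if_pos hij] at hj
            exact (Nat.not_odd_iff_even.mpr hdeven) hj
          · rw [if_neg hij] at hj
            exact (Nat.not_odd_iff_even.mpr Even.zero) hj
    · rintro (⟨hne, -, h0, -, hneg⟩|⟨i, hlt, hi⟩)
      · exact ⟨hne, h0, hneg⟩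
      · subst hi
        exact ⟨hlt.ne, by simp [Finsupp.single_eq_zero, hd0], Or.inl hlt⟩
  have hdisj : Disjoint (Delta d f)
      ((univ.filter (fun i => f.coeff (Finsupp.single i d) < 0)).image
        (fun i => Finsupp.single i d)) := by
    rw [Finset.disjoint_left]
    intro α hα hα'
    obtain ⟨-, -, -, hs⟩ := hmem α hα
    obtain ⟨i, -, hi⟩ := mem_image.mp hα'
    exact (hs i) hi.symm
  have hsumE : ∑ α ∈ (univ.filter (fun i => f.coeff (Finsupp.single i d) < 0)).image
        (fun i => Finsupp.single i d), |f.coeff α| * Nprod α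
      = ∑ j, N j ^ d * max 0 (-(f.coeff (Finsupp.single j d))) := by
    rw [Finset.sum_image (fun i _ j _ h => (Finsupp.single_left_inj hd0).mp h),
        Finset.sum_filter]
    apply Finset.sum_congr rfl
    intro i _
    have hNps : Nprod (Finsupp.single i d) = N i ^ d := by
      rw [hNprod]
      simp only []
      rw [Finset.prod_eq_single i]
      · rw [Finsupp.single_eq_same]
      · intro j _ hj
        rw [Finsupp.single_eq_of_ne' (Ne.symm hj), pow_zero]
      · intro h
        exact absurd (mem_univ i) h
    by_cases h : f.coeff (Finsupp.single i d) < 0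
    · rw [if_pos h, hNps, abs_of_neg h, max_eq_right (by linarith)]
      ring
    · rw [if_neg h, max_eq_left (by push_neg at h; linarith)]
      ring
  -- the key identity
  have hkey : (∑ j, lam j) + obj d G z = ∑ α ∈ Delta' f, |f.coeff α| * Nprod α := by
    rw [hE, Finset.sum_union hdisj, hsumE, hsumlam]
    linarith
  -- finish
  have hGmem : gp d G ∈ {r : EReal | ∃ lam' : Fin n → ℝ, (∀ j, 0 ≤ lam' j) ∧
      r = gp d (f - ∑ j, C (lam' j) * g j)} := ⟨lam, hlamnn, by rw [hGdef]⟩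
  refine le_trans ?_ (le_sSup hGmem)
  have hrho : rho d G ≤ ((obj d G z : ℝ) : EReal) := sInf_le ⟨z, hfeas, rfl⟩
  have h1 : ((G.coeff 0 : ℝ) : EReal) - ((obj d G z : ℝ):EReal) ≤ gp d G := by
    simp only [gp]
    exact EReal.sub_le_sub le_rfl hrho
  refine le_trans ?_ h1
  rw [← EReal.coe_sub, EReal.coe_le_coe_iff]
  rw [trivialBound, hGc0]
  have hTB : ∑ α ∈ Delta' f, |f.coeff α| * ∏ i, N i ^ (α i)
      = ∑ α ∈ Delta' f, |f.coeff α| * Nprod α := rfl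
  rw [hTB]
  linarith
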